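/- Let X be a set, K : X × X → ℂ a bounded function, and x₁, …, xₙ ∈ X pairwise distinct points such that the kernel matrix K[x] is nonsingular. Then the following are equivalent: (i) ‖(K[x])^{-1} K_x(t)‖₁ ≤ 1 for every t ∈ X; (ii) for every c ∈ ℂⁿ, sup_{t∈X} |∑_{j=1}^n c_j K(t, x_j)| = max_{1≤k≤n} |∑_{j=1}^n c_j K(x_k, x_j)|. -/

import Mathlib

/-!
Write `w(t) := K[x]⁻¹ K_x(t)`, so that `∑ⱼ cⱼ K(t, xⱼ) = (cᵀK[x]) · w(t)`. Hölder's inequality for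
the pairing of `ℓ^∞` with `ℓ¹` bounds this by `‖cᵀK[x]‖_∞ ‖w(t)‖₁`, which gives (i) ⇒ (ii), the
reverse inequality coming from `t = x_k`. Conversely, choosing `c` with `cᵀK[x]` the conjugate
sign vector of `w(t)` turns the pairing into `‖w(t)‖₁`, while `‖cᵀK[x]‖_∞ ≤ 1`.
-/

open Matrix
open scoped ENNReal NNReal

/-- The kernel matrix `K[x]`, with `(j,k)` entry `K(x_k, x_j)`. -/
noncomputable def kernelMatrix {X : Type*} (K : X → X → ℂ) {n : ℕ} (x : Fin n → X) :
    Matrix (Fin n) (Fin n) ℂ := Matrix.of fun j k => K (x k) (x j)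

/-- The vector `K_x(t)`, with `j`-th entry `K(t, x_j)`. -/
noncomputable def kernelVec {X : Type*} (K : X → X → ℂ) {n : ℕ} (x : Fin n → X) (t : X) :
    Fin n → ℂ := fun j => K t (x j)

/-- The `ℓ¹` norm of a vector in `ℂⁿ`. -/
noncomputable def l1norm {n : ℕ} (v : Fin n → ℂ) : ℝ := ∑ j, ‖v j‖

open Finset

theorem Matrix.dotProduct_eq_vecMul_dotProduct_inv_mulVec {m R : Type*} [Fintype m]
    [DecidableEq m] [CommRing R] {A : Matrix m m R} (hA : IsUnit A.det) (c v : m → R) :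
    c ⬝ᵥ v = (c ᵥ* A) ⬝ᵥ (A⁻¹ *ᵥ v) := by
  rw [← dotProduct_mulVec, mulVec_mulVec, mul_nonsing_inv A hA, one_mulVec]

theorem nnnorm_dotProduct_le_iSup_mul_sum {ι 𝕜 : Type*} [Fintype ι] [NormedRing 𝕜]
    (a w : ι → 𝕜) :
    (‖a ⬝ᵥ w‖₊ : ℝ≥0∞) ≤ (⨆ k, (‖a k‖₊ : ℝ≥0∞)) * ∑ j, (‖w j‖₊ : ℝ≥0∞) := by
  calc (‖a ⬝ᵥ w‖₊ : ℝ≥0∞)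
      ≤ ∑ j, (‖a j * w j‖₊ : ℝ≥0∞) := by exact_mod_cast nnnorm_sum_le _ _
    _ ≤ ∑ j, (‖a j‖₊ : ℝ≥0∞) * ‖w j‖₊ := by
        gcongr; exact_mod_cast nnnorm_mul_le _ _
    _ ≤ ∑ j, (⨆ k, (‖a k‖₊ : ℝ≥0∞)) * ‖w j‖₊ := by
        gcongr with j; exact le_iSup (fun k => (‖a k‖₊ : ℝ≥0∞)) j
    _ = (⨆ k, (‖a k‖₊ : ℝ≥0∞)) * ∑ j, (‖w j‖₊ : ℝ≥0∞) := by rw [mul_sum]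

theorem exists_norm_le_one_dotProduct_eq_sum_norm {ι 𝕜 : Type*} [Fintype ι] [RCLike 𝕜]
    (w : ι → 𝕜) : ∃ s : ι → 𝕜, (∀ j, ‖s j‖ ≤ 1) ∧ s ⬝ᵥ w = ((∑ j, ‖w j‖ : ℝ) : 𝕜) := by
  -- Where `w j = 0` the entry is the junk value `0 / 0 = 0`, which still works.
  refine ⟨fun j => starRingEnd 𝕜 (w j) / (‖w j‖ : 𝕜), fun j => ?_, ?_⟩
  · rw [norm_div, RCLike.norm_conj, RCLike.norm_ofReal, abs_norm]
    exact div_self_le_one _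
  · push_cast
    refine sum_congr rfl fun j _ => ?_
    rw [div_mul_eq_mul_div, RCLike.conj_mul]
    rcases eq_or_ne ‖w j‖ 0 with h | h
    · simp [h]
    · field_simp

theorem l1norm_nonneg {n : ℕ} (w : Fin n → ℂ) : 0 ≤ l1norm w :=
  sum_nonneg fun _ _ => norm_nonneg _

theorem ofReal_l1norm {n : ℕ} (w : Fin n → ℂ) :
    ENNReal.ofReal (l1norm w) = ∑ j, (‖w j‖₊ : ℝ≥0∞) := by
  rw [l1norm, ENNReal.ofReal_sum_of_nonneg fun _ _ => norm_nonneg _]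
  simp only [ofReal_norm, enorm_eq_nnnorm]

theorem forall_l1norm_inv_mulVec_le_one_iff {X : Type*} {n : ℕ} {A : Matrix (Fin n) (Fin n) ℂ}
    (hA : IsUnit A.det) (v : X → Fin n → ℂ) :
    (∀ t, l1norm (A⁻¹ *ᵥ v t) ≤ 1) ↔
      ∀ c : Fin n → ℂ, (⨆ t, (‖c ⬝ᵥ v t‖₊ : ℝ≥0∞)) ≤ ⨆ k, (‖(c ᵥ* A) k‖₊ : ℝ≥0∞) := by
  constructor
  · intro h c
    refine iSup_le fun t => ?_
    have hw : ∑ j, (‖(A⁻¹ *ᵥ v t) j‖₊ : ℝ≥0∞) ≤ 1 := by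
      rw [← ofReal_l1norm]; exact ENNReal.ofReal_le_one.mpr (h t)
    calc (‖c ⬝ᵥ v t‖₊ : ℝ≥0∞)
        = ‖(c ᵥ* A) ⬝ᵥ (A⁻¹ *ᵥ v t)‖₊ := by rw [dotProduct_eq_vecMul_dotProduct_inv_mulVec hA]
      _ ≤ (⨆ k, (‖(c ᵥ* A) k‖₊ : ℝ≥0∞)) * ∑ j, (‖(A⁻¹ *ᵥ v t) j‖₊ : ℝ≥0∞) :=
          nnnorm_dotProduct_le_iSup_mul_sum _ _
      _ ≤ ⨆ k, (‖(c ᵥ* A) k‖₊ : ℝ≥0∞) := mul_le_of_le_one_right' hw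
  · intro h t
    obtain ⟨s, hs_le, hs_eq⟩ := exists_norm_le_one_dotProduct_eq_sum_norm (A⁻¹ *ᵥ v t)
    have hcA : (s ᵥ* A⁻¹) ᵥ* A = s := by
      rw [vecMul_vecMul, nonsing_inv_mul A hA, vecMul_one]
    have hpair : (s ᵥ* A⁻¹) ⬝ᵥ v t = (l1norm (A⁻¹ *ᵥ v t) : ℂ) := by
      rw [dotProduct_eq_vecMul_dotProduct_inv_mulVec hA, hcA]
      exact hs_eq
    rw [← ENNReal.ofReal_le_one, ← Complex.norm_of_nonneg (l1norm_nonneg _), ofReal_norm,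
      enorm_eq_nnnorm]
    calc (‖((l1norm (A⁻¹ *ᵥ v t) : ℝ) : ℂ)‖₊ : ℝ≥0∞)
        = ‖(s ᵥ* A⁻¹) ⬝ᵥ v t‖₊ := by rw [hpair]
      _ ≤ ⨆ t, (‖(s ᵥ* A⁻¹) ⬝ᵥ v t‖₊ : ℝ≥0∞) := le_iSup_of_le t le_rfl
      _ ≤ ⨆ k, (‖((s ᵥ* A⁻¹) ᵥ* A) k‖₊ : ℝ≥0∞) := h _
      _ ≤ 1 := iSup_le fun k => by rw [hcA]; exact_mod_cast hs_le k

theorem vecMul_kernelMatrix_apply {X : Type*} (K : X → X → ℂ) {n : ℕ} (x : Fin n → X)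
    (c : Fin n → ℂ) (k : Fin n) : (c ᵥ* kernelMatrix K x) k = ∑ j, c j * K (x k) (x j) := rfl

theorem dotProduct_kernelVec {X : Type*} (K : X → X → ℂ) {n : ℕ} (x : Fin n → X)
    (c : Fin n → ℂ) (t : X) : c ⬝ᵥ kernelVec K x t = ∑ j, c j * K t (x j) := rfl

theorem stmt_10_general {X : Type*} (K : X → X → ℂ)
    (n : ℕ) (x : Fin n → X)
    (hdet : IsUnit (kernelMatrix K x).det) :
    (∀ t : X, l1norm ((kernelMatrix K x)⁻¹ *ᵥ kernelVec K x t) ≤ 1)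
      ↔
    ∀ c : Fin n → ℂ,
      (⨆ t : X, (‖∑ j, c j * K t (x j)‖₊ : ℝ≥0∞)) =
        ⨆ k : Fin n, (‖∑ j, c j * K (x k) (x j)‖₊ : ℝ≥0∞) := by
  rw [forall_l1norm_inv_mulVec_le_one_iff hdet]
  simp only [dotProduct_kernelVec, vecMul_kernelMatrix_apply]
  refine forall_congr' fun c => (le_antisymm_iff.trans (and_iff_left ?_)).symm
  exact iSup_le fun k => le_iSup (fun t => (‖∑ j, c j * K t (x j)‖₊ : ℝ≥0∞)) (x k)

theorem stmt_10 {X : Type*} (K : X → X → ℂ) (M : ℝ)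
    (hK : ∀ s t, ‖K s t‖ ≤ M)
    (n : ℕ) (x : Fin n → X) (hx : Function.Injective x)
    (hdet : IsUnit (kernelMatrix K x).det) :
    (∀ t : X, l1norm ((kernelMatrix K x)⁻¹ *ᵥ kernelVec K x t) ≤ 1)
      ↔
    ∀ c : Fin n → ℂ,
      (⨆ t : X, (‖∑ j, c j * K t (x j)‖₊ : ℝ≥0∞)) =
        ⨆ k : Fin n, (‖∑ j, c j * K (x k) (x j)‖₊ : ℝ≥0∞) :=
  stmt_10_general K n x hdet
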